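/- For 1 < β < 2, the weights ω_k^{(β)} satisfy ω_0^{(β)} = λ_1 = (β² + 3β + 2)/12 > 0 and ω_0^{(β)} + ω_2^{(β)} ≥ 0. -/
import Mathlib


noncomputable def grunwaldG (β : ℝ) (k : ℕ) : ℝ :=
  (-1 : ℝ) ^ k * (∏ i ∈ Finset.range k, (β - i)) / (Nat.factorial k)

noncomputable def lam1 (β : ℝ) : ℝ := (β ^ 2 + 3 * β + 2) / 12
noncomputable def lam0 (β : ℝ) : ℝ := (4 - β ^ 2) / 6
noncomputable def lamm1 (β : ℝ) : ℝ := (β ^ 2 - 3 * β + 2) / 12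

/-- The weights `ω_k^{(β)}`. -/
noncomputable def omegaW (β : ℝ) : ℕ → ℝ
  | 0 => lam1 β * grunwaldG β 0
  | 1 => lam1 β * grunwaldG β 1 + lam0 β * grunwaldG β 0
  | (k + 2) => lam1 β * grunwaldG β (k + 2) + lam0 β * grunwaldG β (k + 1)
      + lamm1 β * grunwaldG β k

theorem stmt6 (β : ℝ) (hβ : 1 < β) (hβ' : β < 2) :
    omegaW β 0 = (β ^ 2 + 3 * β + 2) / 12 ∧ 0 < omegaW β 0 ∧
    0 ≤ omegaW β 0 + omegaW β 2 := by
  have h0 : grunwaldG β 0 = 1 := by simp [grunwaldG]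
  have h1 : grunwaldG β 1 = -β := by simp [grunwaldG]
  have h2 : grunwaldG β 2 = β * (β - 1) / 2 := by
    simp [grunwaldG, Finset.prod_range_succ, Nat.factorial]
    try ring
  refine ⟨?_, ?_, ?_⟩ <;>
    simp [omegaW, lam1, lam0, lamm1, h0, h1, h2] <;>
    nlinarith [sq_nonneg β, sq_nonneg (β - 1), sq_nonneg (β - 2), sq_nonneg (β + 1)]
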